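/- Let Ξ_{≥α} = {x ∈ K : liminf_{r→0} log μ(B(x,r))/log r ≥ α}. If the open set condition holds and α ≥ α(0) = -β'(0), then the packing dimension of Ξ_{≥α} is at most β*(α) = inf_q (αq + β(q)). -/

import Mathlib

open Metric MeasureTheory Topology Filter
open scoped NNReal ENNReal

/-- The `δ`-pre-packing content `P^s_δ`-style supremum: the supremum of `∑ diam(B_i)^s`
over countable disjoint families of closed balls of diameter at most `δ` centred in `A`,
followed by letting `δ → 0`.  This is the pre-packing measure `P^s(A)`. -/
noncomputable def prePackingMeasure {X : Type*} [MetricSpace X] (s : ℝ) (A : Set X) : ℝ≥0∞ :=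
  ⨅ (δ : ℝ) (_ : 0 < δ),
    ⨆ (c : ℕ → X) (ρ : ℕ → ℝ) (_ : ∀ n, c n ∈ A) (_ : ∀ n, 0 < ρ n ∧ 2 * ρ n ≤ δ)
      (_ : Pairwise fun m n => Disjoint (closedBall (c m) (ρ m)) (closedBall (c n) (ρ n))),
      ∑' n, ENNReal.ofReal (2 * ρ n) ^ s

/-- The packing measure `𝒫^s(A) = inf { ∑ᵢ P^s(Aᵢ) : A ⊆ ⋃ᵢ Aᵢ }`. -/
noncomputable def packingMeasure {X : Type*} [MetricSpace X] (s : ℝ) (A : Set X) : ℝ≥0∞ :=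
  ⨅ (f : ℕ → Set X) (_ : A ⊆ ⋃ n, f n), ∑' n, prePackingMeasure s (f n)

/-- The packing dimension `dim_P A = inf { s ≥ 0 : 𝒫^s(A) = 0 }`. -/
noncomputable def dimP {X : Type*} [MetricSpace X] (A : Set X) : ℝ :=
  sInf {s : ℝ | 0 ≤ s ∧ packingMeasure s A = 0}

/-!
For `q ≤ 0` and `t > β q` we have `∑ i, p i ^ q * r i ^ t < 1`. Near a point of the level set,
`μ (ball x ρ) ≤ ρ ^ (α - ε)` for all small `ρ`, while the ball contains a cylinder `S_w '' K`
through `x` with `r_w` comparable to `ρ`, whose measure is at least `p_w`. So each ball of a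
`δ`-packing has `(2ρ) ^ s ≲ δ ^ θ * p_w ^ q * r_w ^ t` with `θ > 0` once `s > (α - ε) q + t`;
disjoint balls get distinct words, and `p_w ^ q * r_w ^ t` summed over all words is the finite
geometric series `(1 - ∑ i, p i ^ q * r i ^ t)⁻¹`. Hence the pre-packing measures vanish and
`dim_P ≤ max (α q + β q) 0`. For `q > 0`, convexity of `β` and `α ≥ -β'(0)` give
`α q + β q ≥ β 0`. Finally `β (c q) ≤ c β q` for `c ≥ 1`, so `q ↦ α q + β q` is either
nonnegative or unbounded below.
-/

open Set

section PackingDimension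

variable {X : Type*} [MetricSpace X]

lemma prePackingMeasure_eq_zero_of_forall_le {s θ δ₀ : ℝ} {C : ℝ≥0∞} {A : Set X}
    (hθ : 0 < θ) (hδ₀ : 0 < δ₀) (hC : C ≠ ∞)
    (h : ∀ δ, 0 < δ → δ ≤ δ₀ → ∀ (c : ℕ → X) (ρ : ℕ → ℝ), (∀ n, c n ∈ A) →
      (∀ n, 0 < ρ n ∧ 2 * ρ n ≤ δ) →
      Pairwise (fun m n => Disjoint (closedBall (c m) (ρ m)) (closedBall (c n) (ρ n))) →
      ∑' n, ENNReal.ofReal (2 * ρ n) ^ s ≤ C * ENNReal.ofReal (δ ^ θ)) :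
    prePackingMeasure s A = 0 := by
  have hbound : ∀ δ ∈ Ioc 0 δ₀, prePackingMeasure s A ≤ C * ENNReal.ofReal (δ ^ θ) :=
    fun δ hδ => iInf₂_le_of_le δ hδ.1 <| iSup_le fun c => iSup_le fun ρ =>
      iSup_le fun hc => iSup_le fun hρ => iSup_le fun hdisj => h δ hδ.1 hδ.2 c ρ hc hρ hdisj
  have hlim : Tendsto (fun δ : ℝ => C * ENNReal.ofReal (δ ^ θ)) (𝓝[>] 0) (𝓝 0) := by
    have hrpow : Tendsto (fun δ : ℝ => δ ^ θ) (𝓝[>] 0) (𝓝 0) := by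
      simpa [Real.zero_rpow hθ.ne'] using
        (Real.continuousAt_rpow_const 0 θ (Or.inr hθ.le)).tendsto.mono_left nhdsWithin_le_nhds
    simpa using ENNReal.Tendsto.const_mul (ENNReal.tendsto_ofReal hrpow) (Or.inr hC)
  exact nonpos_iff_eq_zero.1 <| ge_of_tendsto hlim <|
    eventually_of_mem (Ioc_mem_nhdsGT hδ₀) hbound

lemma packingMeasure_eq_zero_of_subset_iUnion {s : ℝ} {A : Set X} {B : ℕ → Set X}
    (hAB : A ⊆ ⋃ n, B n) (hB : ∀ n, prePackingMeasure s (B n) = 0) :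
    packingMeasure s A = 0 :=
  nonpos_iff_eq_zero.1 <| iInf₂_le_of_le B hAB (by simp [hB])

lemma dimP_le_of_packingMeasure_eq_zero {s : ℝ} {A : Set X} (hs : 0 ≤ s)
    (h : packingMeasure s A = 0) : dimP A ≤ s :=
  csInf_le ⟨0, fun _ ht => ht.1⟩ ⟨hs, h⟩

lemma dimP_le_max_of_packingMeasure_eq_zero {b : ℝ} {A : Set X}
    (h : ∀ s, b < s → 0 ≤ s → packingMeasure s A = 0) : dimP A ≤ max b 0 :=
  le_of_forall_gt_imp_ge_of_dense fun s hs =>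
    dimP_le_of_packingMeasure_eq_zero ((le_max_right _ _).trans hs.le)
      (h s ((le_max_left _ _).trans_lt hs) ((le_max_right _ _).trans hs.le))

end PackingDimension

section Words

variable {ι E : Type*}

def wordMap (S : ι → E → E) : List ι → E → E
  | [] => id
  | i :: w => S i ∘ wordMap S w

lemma mapsTo_wordMap {S : ι → E → E} {K : Set E} (hK : ∀ i, MapsTo (S i) K K) (w : List ι) :
    MapsTo (wordMap S w) K K := by
  induction w with
  | nil => exact mapsTo_id K
  | cons i w ih => exact (hK i).comp ih

lemma list_prod_map_le_pow_length {f : ι → ℝ} {c : ℝ} (hf₀ : ∀ i, 0 ≤ f i) (hfc : ∀ i, f i ≤ c)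
    (w : List ι) : (w.map f).prod ≤ c ^ w.length := by
  induction w with
  | nil => simp
  | cons i w ih =>
    rw [List.map_cons, List.prod_cons, List.length_cons, pow_succ']
    exact mul_le_mul (hfc i) ih (List.prod_nonneg (List.forall_mem_map.2 fun j _ => hf₀ j))
      ((hf₀ i).trans (hfc i))

lemma list_prod_map_rpow_mul_rpow {p r : ι → ℝ} (hp : ∀ i, 0 < p i) (hr : ∀ i, 0 < r i)
    (q t : ℝ) (w : List ι) :
    (w.map p).prod ^ q * (w.map r).prod ^ t = (w.map fun i => p i ^ q * r i ^ t).prod := by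
  induction w with
  | nil => simp
  | cons i w ih =>
    simp only [List.map_cons, List.prod_cons, ← ih]
    rw [Real.mul_rpow (hp i).le (List.prod_nonneg (List.forall_mem_map.2 fun j _ => (hp j).le)),
      Real.mul_rpow (hr i).le (List.prod_nonneg (List.forall_mem_map.2 fun j _ => (hr j).le))]
    ring

lemma ENNReal.ofReal_list_prod_map {f : ι → ℝ} (hf : ∀ i, 0 ≤ f i) (w : List ι) :
    ENNReal.ofReal (w.map f).prod = (w.map fun i => ENNReal.ofReal (f i)).prod := by
  induction w with
  | nil => simp
  | cons i w ih =>
    simp only [List.map_cons, List.prod_cons, ← ih]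
    exact ENNReal.ofReal_mul (hf i)

lemma ENNReal.tsum_list_prod_map [Fintype ι] (f : ι → ℝ≥0∞) :
    ∑' w : List ι, (w.map f).prod = (1 - ∑ i, f i)⁻¹ := by
  rw [← ENNReal.tsum_geometric, ← List.equivSigmaTuple.symm.tsum_eq, ENNReal.tsum_sigma']
  refine tsum_congr fun n => ?_
  rw [tsum_fintype, Fintype.sum_pow]
  refine Finset.sum_congr rfl fun v _ => ?_
  simp [List.equivSigmaTuple, List.map_ofFn, List.prod_ofFn]

lemma exists_word_mem_image_prod_mem_Ico {S : ι → E → E} {r : ι → ℝ} {K : Set E}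
    (hK : K ⊆ ⋃ i, S i '' K) {m c : ℝ} (hm : 0 < m) (hmr : ∀ i, m ≤ r i) (hrc : ∀ i, r i ≤ c)
    (hc : c < 1) {x : E} (hx : x ∈ K) {τ : ℝ} (hτ : 0 < τ) (hτm : τ * m ≤ 1) :
    ∃ w : List ι, x ∈ wordMap S w '' K ∧ (w.map r).prod ∈ Ico (τ * m) τ := by
  obtain ⟨n, hn⟩ := exists_pow_lt_of_lt_one hτ hc
  induction n generalizing x τ with
  | zero => exact ⟨[], by simpa [wordMap] using hx, by simpa using hτm, by simpa using hn⟩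
  | succ n ih =>
    by_cases hτ1 : 1 < τ
    · exact ⟨[], by simpa [wordMap] using hx, by simpa using hτm, by simpa using hτ1⟩
    obtain ⟨i, y, hy, rfl⟩ := mem_iUnion.1 (hK hx)
    have hri : 0 < r i := hm.trans_le (hmr i)
    have hcn : c ^ n * r i < τ :=
      calc c ^ n * r i ≤ c ^ n * c :=
          mul_le_mul_of_nonneg_left (hrc i) (pow_nonneg (hri.trans_le (hrc i)).le n)
        _ < τ := by rwa [← pow_succ]
    obtain ⟨w, ⟨z, hz, rfl⟩, hle, hlt⟩ := ih hy (τ := τ / r i) (div_pos hτ hri)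
      (by rw [div_mul_eq_mul_div, div_le_one hri]; nlinarith [hmr i])
      (by rwa [lt_div_iff₀ hri])
    refine ⟨i :: w, ⟨z, hz, rfl⟩, ?_, ?_⟩
    · rw [List.map_cons, List.prod_cons]
      calc τ * m = r i * (τ / r i * m) := by field_simp
        _ ≤ r i * (w.map r).prod := mul_le_mul_of_nonneg_left hle hri.le
    · simpa [List.prod_cons, lt_div_iff₀ hri, mul_comm] using hlt

end Words

section Cylinders

variable {ι E : Type*} [MetricSpace E] {S : ι → E → E} {r : ι → ℝ} {K : Set E}

lemma dist_wordMap (hS : ∀ i x y, dist (S i x) (S i y) = r i * dist x y) (w : List ι) (x y : E) :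
    dist (wordMap S w x) (wordMap S w y) = (w.map r).prod * dist x y := by
  induction w with
  | nil => simp [wordMap]
  | cons i w ih => simp [wordMap, hS, ih, mul_assoc]

lemma exists_word_mem_image_subset_ball (hS : ∀ i x y, dist (S i x) (S i y) = r i * dist x y)
    (hK : K ⊆ ⋃ i, S i '' K) (hKb : Bornology.IsBounded K) {m c D : ℝ} (hm : 0 < m)
    (hmr : ∀ i, m ≤ r i) (hrc : ∀ i, r i ≤ c) (hc : c < 1) (hKD : diam K < D) {x : E}
    (hx : x ∈ K) {ρ : ℝ} (hρ : 0 < ρ) (hρD : ρ ≤ D) :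
    ∃ w : List ι, x ∈ wordMap S w '' K ∧ wordMap S w '' K ⊆ ball x ρ ∧
      ρ * m ≤ (w.map r).prod * D := by
  have hD : 0 < D := diam_nonneg.trans_lt hKD
  obtain ⟨i, -⟩ := mem_iUnion.1 (hK hx)
  obtain ⟨w, hxw, hle, hlt⟩ := exists_word_mem_image_prod_mem_Ico hK hm hmr hrc hc hx
    (div_pos hρ hD) (by
      rw [div_mul_eq_mul_div, div_le_one hD]
      nlinarith [hmr i, hrc i])
  rw [lt_div_iff₀ hD] at hlt
  refine ⟨w, hxw, ?_, by rwa [div_mul_eq_mul_div, div_le_iff₀ hD] at hle⟩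
  obtain ⟨z', hz', rfl⟩ := hxw
  rintro _ ⟨z, hz, rfl⟩
  have hrw : 0 ≤ (w.map r).prod :=
    List.prod_nonneg (List.forall_mem_map.2 fun j _ => hm.le.trans (hmr j))
  rw [mem_ball, dist_wordMap hS]
  calc (w.map r).prod * dist z z' ≤ (w.map r).prod * D :=
        mul_le_mul_of_nonneg_left ((dist_le_diam_of_mem hKb hz hz').trans hKD.le) hrw
    _ < ρ := hlt

end Cylinders

section Spectrum

variable {ι : Type*} {p r : ι → ℝ} {β : ℝ → ℝ}

lemma rpow_mul_rpow_eq_exp (hp : ∀ i, 0 < p i) (hr : ∀ i, 0 < r i) (q t : ℝ) (i : ι) :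
    p i ^ q * r i ^ t = Real.exp (q * Real.log (p i) + t * Real.log (r i)) := by
  rw [Real.rpow_def_of_pos (hp i), Real.rpow_def_of_pos (hr i), ← Real.exp_add]
  ring_nf

variable [Fintype ι] [Nonempty ι]

lemma strictAnti_sum_rpow_mul_rpow (hp : ∀ i, 0 < p i) (hr : ∀ i, r i ∈ Ioo 0 1)
    (q : ℝ) : StrictAnti fun t : ℝ => ∑ i, p i ^ q * r i ^ t := by
  intro t₁ t₂ ht
  exact Finset.sum_lt_sum_of_nonempty Finset.univ_nonempty fun i _ =>
    mul_lt_mul_of_pos_left (Real.rpow_lt_rpow_of_exponent_gt (hr i).1 (hr i).2 ht)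
      (Real.rpow_pos_of_pos (hp i) q)

lemma le_of_sum_rpow_mul_rpow_le_one (hp : ∀ i, 0 < p i)
    (hr : ∀ i, r i ∈ Ioo 0 1) (hβ : ∀ q, ∑ i, p i ^ q * r i ^ β q = 1) {q t : ℝ}
    (h : ∑ i, p i ^ q * r i ^ t ≤ 1) : β q ≤ t := by
  by_contra! hlt
  linarith [hβ q, strictAnti_sum_rpow_mul_rpow hp hr q hlt]

lemma nonneg_of_nonpos_of_sum_rpow_mul_rpow_eq_one (hp : ∀ i, 0 < p i)
    (hpsum : ∑ i, p i = 1) (hr : ∀ i, r i ∈ Ioo 0 1) (hβ : ∀ q, ∑ i, p i ^ q * r i ^ β q = 1)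
    {q : ℝ} (hq : q ≤ 0) : 0 ≤ β q := by
  by_contra! hlt
  have hlt' := strictAnti_sum_rpow_mul_rpow hp hr q hlt
  simp only [hβ q, Real.rpow_zero, mul_one] at hlt'
  refine hlt'.not_ge (hpsum ▸ Finset.sum_le_sum fun i _ => ?_)
  have hp1 : p i ≤ 1 := hpsum ▸ Finset.single_le_sum (fun j _ => (hp j).le) (Finset.mem_univ i)
  simpa using hp1.trans (Real.one_le_rpow_of_pos_of_le_one_of_nonpos (hp i) hp1 hq)

lemma convexOn_of_sum_rpow_mul_rpow_eq_one (hp : ∀ i, 0 < p i)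
    (hr : ∀ i, r i ∈ Ioo 0 1) (hβ : ∀ q, ∑ i, p i ^ q * r i ^ β q = 1) :
    ConvexOn ℝ univ β := by
  refine ⟨convex_univ, fun q₁ _ q₂ _ a b ha hb hab => le_of_sum_rpow_mul_rpow_le_one hp hr hβ ?_⟩
  simp only [rpow_mul_rpow_eq_exp hp (fun i => (hr i).1), smul_eq_mul] at hβ ⊢
  calc ∑ i, Real.exp ((a * q₁ + b * q₂) * Real.log (p i) + (a * β q₁ + b * β q₂) * Real.log (r i))
      = ∑ i, Real.exp (a * (q₁ * Real.log (p i) + β q₁ * Real.log (r i)) +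
          b * (q₂ * Real.log (p i) + β q₂ * Real.log (r i))) := by ring_nf
    _ ≤ ∑ i, (a * Real.exp (q₁ * Real.log (p i) + β q₁ * Real.log (r i)) +
          b * Real.exp (q₂ * Real.log (p i) + β q₂ * Real.log (r i))) :=
      Finset.sum_le_sum fun i _ => convexOn_exp.2 (mem_univ _) (mem_univ _) ha hb hab
    _ = 1 := by rw [Finset.sum_add_distrib, ← Finset.mul_sum, ← Finset.mul_sum, hβ, hβ]; linarith

lemma le_mul_of_sum_rpow_mul_rpow_eq_one (hp : ∀ i, 0 < p i)
    (hr : ∀ i, r i ∈ Ioo 0 1) (hβ : ∀ q, ∑ i, p i ^ q * r i ^ β q = 1) {c : ℝ} (hc : 1 ≤ c)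
    (q : ℝ) : β (c * q) ≤ c * β q := by
  refine le_of_sum_rpow_mul_rpow_le_one hp hr hβ ?_
  simp only [rpow_mul_rpow_eq_exp hp (fun i => (hr i).1)] at hβ ⊢
  calc ∑ i, Real.exp (c * q * Real.log (p i) + c * β q * Real.log (r i))
      = ∑ i, Real.exp (q * Real.log (p i) + β q * Real.log (r i)) ^ c := by
        simp only [← Real.exp_mul]; ring_nf
    _ ≤ ∑ i, Real.exp (q * Real.log (p i) + β q * Real.log (r i)) :=
      Finset.sum_le_sum fun i _ => Real.rpow_le_self_of_le_one (Real.exp_nonneg _)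
        ((hβ q).symm ▸ Finset.single_le_sum
          (f := fun j => Real.exp (q * Real.log (p j) + β q * Real.log (r j)))
          (fun j _ => Real.exp_nonneg _) (Finset.mem_univ i)) hc
    _ = 1 := hβ q

lemma mul_add_nonneg_of_bddBelow (hp : ∀ i, 0 < p i) (hr : ∀ i, r i ∈ Ioo 0 1)
    (hβ : ∀ q, ∑ i, p i ^ q * r i ^ β q = 1) {α : ℝ}
    (hbdd : BddBelow (range fun q => α * q + β q)) (q : ℝ) : 0 ≤ α * q + β q := by
  obtain ⟨b, hb⟩ := hbdd
  by_contra! hneg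
  set c := max 1 (b / (α * q + β q) + 1)
  have hβc : β (c * q) ≤ c * β q :=
    le_mul_of_sum_rpow_mul_rpow_eq_one hp hr hβ (le_max_left _ _) q
  have hc : c * (α * q + β q) ≤ (b / (α * q + β q) + 1) * (α * q + β q) :=
    mul_le_mul_of_nonpos_right (le_max_right _ _) hneg.le
  rw [add_mul, div_mul_cancel₀ _ hneg.ne] at hc
  linarith [hb ⟨c * q, rfl⟩]

lemma le_mul_add_of_hasDerivAt (hp : ∀ i, 0 < p i) (hr : ∀ i, r i ∈ Ioo 0 1)
    (hβ : ∀ q, ∑ i, p i ^ q * r i ^ β q = 1) {β'₀ : ℝ} (hβ' : HasDerivAt β β'₀ 0) {α : ℝ}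
    (hα : -β'₀ ≤ α) {q : ℝ} (hq : 0 ≤ q) : β 0 ≤ α * q + β q := by
  rcases hq.eq_or_lt with rfl | hq
  · simp
  have hslope := (convexOn_of_sum_rpow_mul_rpow_eq_one hp hr hβ).le_slope_of_hasDerivAt
    (mem_univ 0) (mem_univ q) hq hβ'
  rw [slope_def_field, sub_zero, le_div_iff₀ hq] at hslope
  nlinarith

end Spectrum

section Measure

variable {ι E : Type*} [Fintype ι] [MeasurableSpace E] {S : ι → E → E} {p : ι → ℝ} {μ : Measure E}

lemma measure_eq_sum_preimage (hSm : ∀ i, Measurable (S i))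
    (hμ : μ = ∑ i, ENNReal.ofReal (p i) • μ.map (S i)) {A : Set E} (hA : MeasurableSet A) :
    μ A = ∑ i, ENNReal.ofReal (p i) * μ (S i ⁻¹' A) := by
  conv_lhs => rw [hμ]
  simp [Measure.map_apply (hSm _) hA]

lemma ofReal_prod_mul_measure_preimage_wordMap_le (hSm : ∀ i, Measurable (S i))
    (hμ : μ = ∑ i, ENNReal.ofReal (p i) • μ.map (S i)) (hp : ∀ i, 0 ≤ p i) (w : List ι)
    {A : Set E} (hA : MeasurableSet A) :
    ENNReal.ofReal (w.map p).prod * μ (wordMap S w ⁻¹' A) ≤ μ A := by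
  induction w generalizing A with
  | nil => simp [wordMap]
  | cons i w ih =>
    rw [List.map_cons, List.prod_cons, ENNReal.ofReal_mul (hp i), mul_assoc]
    calc ENNReal.ofReal (p i) * (ENNReal.ofReal (w.map p).prod * μ (wordMap S w ⁻¹' (S i ⁻¹' A)))
        ≤ ENNReal.ofReal (p i) * μ (S i ⁻¹' A) := by gcongr; exact ih (hSm i hA)
      _ ≤ μ A := by
        rw [measure_eq_sum_preimage hSm hμ hA]
        exact Finset.single_le_sum (f := fun j => ENNReal.ofReal (p j) * μ (S j ⁻¹' A))
          (fun _ _ => zero_le) (Finset.mem_univ i)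

lemma measure_le_of_forall_mapsTo_wordMap (hSm : ∀ i, Measurable (S i))
    (hμ : μ = ∑ i, ENNReal.ofReal (p i) • μ.map (S i)) (hp : ∀ i, 0 ≤ p i)
    (hpsum : ∑ i, p i = 1) {W A : Set E} (hA : MeasurableSet A) (n : ℕ)
    (hWA : ∀ w : List ι, w.length = n → MapsTo (wordMap S w) W A) : μ W ≤ μ A := by
  induction n generalizing A with
  | zero => exact measure_mono fun y hy => hWA [] rfl hy
  | succ n ih =>
    have hsum : ∑ i, ENNReal.ofReal (p i) = 1 := by
      rw [← ENNReal.ofReal_sum_of_nonneg fun i _ => hp i, hpsum, ENNReal.ofReal_one]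
    calc μ W = ∑ i, ENNReal.ofReal (p i) * μ W := by rw [← Finset.sum_mul, hsum, one_mul]
      _ ≤ ∑ i, ENNReal.ofReal (p i) * μ (S i ⁻¹' A) := by
        refine Finset.sum_le_sum fun i _ => mul_le_mul_right ?_ _
        exact ih (hSm i hA) fun w hw y hy => hWA (i :: w) (by simp [hw]) hy
      _ = μ A := (measure_eq_sum_preimage hSm hμ hA).symm

lemma ofReal_prod_le_measure_of_image_wordMap_subset (hSm : ∀ i, Measurable (S i))
    (hμ : μ = ∑ i, ENNReal.ofReal (p i) • μ.map (S i)) (hp : ∀ i, 0 ≤ p i) {K A : Set E}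
    (hμK : μ K = 1) {w : List ι} (hKA : wordMap S w '' K ⊆ A) (hA : MeasurableSet A) :
    ENNReal.ofReal (w.map p).prod ≤ μ A :=
  calc ENNReal.ofReal (w.map p).prod = ENNReal.ofReal (w.map p).prod * μ K := by rw [hμK, mul_one]
    _ ≤ ENNReal.ofReal (w.map p).prod * μ (wordMap S w ⁻¹' A) := by
      gcongr; exact image_subset_iff.1 hKA
    _ ≤ μ A := ofReal_prod_mul_measure_preimage_wordMap_le hSm hμ hp w hA

end Measure

section Attractor

variable {ι E : Type*} [Fintype ι] [MetricSpace E] [MeasurableSpace E] [BorelSpace E]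
  {S : ι → E → E} {r p : ι → ℝ} {μ : Measure E} {K : Set E}

-- Long words contract any ball into every thickening of `K`, so invariance puts full mass there.
lemma measure_attractor_eq_one [IsProbabilityMeasure μ]
    (hS : ∀ i x y, dist (S i x) (S i y) = r i * dist x y) (hr₀ : ∀ i, 0 ≤ r i) {c : ℝ}
    (hrc : ∀ i, r i ≤ c) (hc : c < 1) (hμ : μ = ∑ i, ENNReal.ofReal (p i) • μ.map (S i))
    (hp : ∀ i, 0 ≤ p i) (hpsum : ∑ i, p i = 1) (hK : ∀ i, MapsTo (S i) K K)
    (hKc : IsClosed K) (hKne : K.Nonempty) : μ K = 1 := by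
  have hSm : ∀ i, Measurable (S i) := fun i =>
    (LipschitzWith.of_dist_le' fun x y => (hS i x y).le).continuous.measurable
  obtain ⟨x₀, hx₀⟩ := hKne
  have hball : ∀ ε > 0, ∀ R : ℕ, μ (ball x₀ R) ≤ μ (thickening ε K) := by
    intro ε hε R
    obtain ⟨n, hn⟩ := exists_pow_lt_of_lt_one (div_pos hε (Nat.cast_add_one_pos R)) hc
    refine measure_le_of_forall_mapsTo_wordMap hSm hμ hp hpsum isOpen_thickening.measurableSet n
      fun w hw y hy => mem_thickening_iff.2 ⟨_, mapsTo_wordMap hK w hx₀, ?_⟩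
    have hrw : (w.map r).prod ≤ c ^ n := hw ▸ list_prod_map_le_pow_length hr₀ hrc w
    have hrw₀ : 0 ≤ (w.map r).prod := List.prod_nonneg (List.forall_mem_map.2 fun j _ => hr₀ j)
    rw [dist_wordMap hS]
    calc (w.map r).prod * dist y x₀ ≤ c ^ n * (R + 1) :=
          mul_le_mul hrw (by linarith [mem_ball.1 hy]) dist_nonneg (hrw₀.trans hrw)
      _ < ε := by rwa [lt_div_iff₀ (Nat.cast_add_one_pos R)] at hn
  have hthick : ∀ ε > 0, μ (thickening ε K) = 1 := by
    intro ε hε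
    refine le_antisymm prob_le_one ?_
    have hlim := tendsto_measure_iUnion_atTop (μ := μ) (s := fun R : ℕ => ball x₀ R)
      (monotone_nat_of_le_succ fun R => ball_subset_ball (by push_cast; linarith))
    rw [iUnion_ball_nat, measure_univ] at hlim
    exact le_of_tendsto' hlim (hball ε hε)
  refine tendsto_nhds_unique (tendsto_measure_thickening_of_isClosed
    ⟨1, one_pos, measure_ne_top μ _⟩ hKc) ?_
  exact tendsto_const_nhds.congr' (eventually_nhdsWithin_of_forall fun ε hε => (hthick ε hε).symm)

end Attractor

lemma two_mul_rpow_le {ρ δ D m P R a q t s : ℝ} (hρ : 0 < ρ) (hρδ : 2 * ρ ≤ δ) (hm : 0 < m)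
    (hD : 0 < D) (hP : 0 < P) (hPρ : P ≤ ρ ^ a) (hR : 0 ≤ R) (hρR : ρ * m ≤ R * D)
    (hq : q ≤ 0) (ht : 0 ≤ t) (hs : a * q + t ≤ s) :
    (2 * ρ) ^ s ≤ 2 ^ (a * q) * (2 * D / m) ^ t * δ ^ (s - a * q - t) * (P ^ q * R ^ t) := by
  have h2ρ : 0 < 2 * ρ := by positivity
  have hδ : (2 * ρ) ^ (s - a * q - t) ≤ δ ^ (s - a * q - t) :=
    Real.rpow_le_rpow h2ρ.le hρδ (by linarith)
  have hP' : (2 * ρ) ^ (a * q) ≤ 2 ^ (a * q) * P ^ q := by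
    rw [Real.mul_rpow zero_le_two hρ.le, Real.rpow_mul hρ.le]
    exact mul_le_mul_of_nonneg_left (Real.rpow_le_rpow_of_nonpos hP hPρ hq) (by positivity)
  have hR' : (2 * ρ) ^ t ≤ (2 * D / m) ^ t * R ^ t := by
    rw [← Real.mul_rpow (by positivity) hR]
    refine Real.rpow_le_rpow h2ρ.le ?_ ht
    rw [div_mul_eq_mul_div, le_div_iff₀ hm]
    nlinarith
  calc (2 * ρ) ^ s = (2 * ρ) ^ (s - a * q - t) * ((2 * ρ) ^ (a * q) * (2 * ρ) ^ t) := by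
        rw [← Real.rpow_add h2ρ, ← Real.rpow_add h2ρ]; ring_nf
    _ ≤ δ ^ (s - a * q - t) * ((2 ^ (a * q) * P ^ q) * ((2 * D / m) ^ t * R ^ t)) := by
        have : 0 ≤ δ ^ (s - a * q - t) := Real.rpow_nonneg (h2ρ.le.trans hρδ) _
        gcongr ?_ * (?_ * ?_)
    _ = _ := by ring

lemma eventually_le_rpow_of_lt_liminf {u : ℝ → ℝ} (hu₀ : ∀ ρ, 0 ≤ u ρ) (hu₁ : ∀ ρ, u ρ ≤ 1)
    {a : ℝ} (h : a < liminf (fun ρ => Real.log (u ρ) / Real.log ρ) (𝓝[>] 0)) :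
    ∀ᶠ ρ in 𝓝[>] 0, u ρ ≤ ρ ^ a := by
  have hpos : ∀ᶠ ρ in 𝓝[>] (0 : ℝ), ρ ∈ Ioo 0 1 := Ioo_mem_nhdsGT one_pos
  have hbdd : IsBoundedUnder (· ≥ ·) (𝓝[>] 0) fun ρ => Real.log (u ρ) / Real.log ρ :=
    isBoundedUnder_of_eventually_ge (a := 0) <| hpos.mono fun ρ hρ =>
      div_nonneg_of_nonpos (Real.log_nonpos (hu₀ ρ) (hu₁ ρ)) (Real.log_neg hρ.1 hρ.2).le
  filter_upwards [eventually_lt_of_lt_liminf h hbdd, hpos] with ρ hρa hρ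
  rcases (hu₀ ρ).eq_or_lt with hu | hu
  · rw [← hu]; positivity [hρ.1]
  rw [Real.le_rpow_iff_log_le hu hρ.1]
  exact ((lt_div_iff_of_neg (Real.log_neg hρ.1 hρ.2)).1 hρa).le

section Estimate

variable {ι E : Type*} [Fintype ι] [MetricSpace E] [MeasurableSpace E] [BorelSpace E]
  {S : ι → E → E} {r p : ι → ℝ} {μ : Measure E} {K : Set E}

lemma tsum_rpow_le_of_measure_ball_le [IsFiniteMeasure μ]
    (hS : ∀ i x y, dist (S i x) (S i y) = r i * dist x y)
    (hK : K ⊆ ⋃ i, S i '' K) (hKb : Bornology.IsBounded K) {m c D : ℝ} (hm : 0 < m)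
    (hmr : ∀ i, m ≤ r i) (hrc : ∀ i, r i ≤ c) (hc : c < 1) (hKD : diam K < D)
    (hμ : μ = ∑ i, ENNReal.ofReal (p i) • μ.map (S i)) (hp : ∀ i, 0 < p i) (hμK : μ K = 1)
    {a q t s δ : ℝ} (hq : q ≤ 0) (ht : 0 ≤ t) (hs : a * q + t ≤ s) {x : ℕ → E} {ρ : ℕ → ℝ}
    (hx : ∀ n, x n ∈ K) (hxμ : ∀ n, (μ (ball (x n) (ρ n))).toReal ≤ ρ n ^ a)
    (hρ : ∀ n, 0 < ρ n ∧ 2 * ρ n ≤ δ) (hρD : ∀ n, ρ n ≤ D)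
    (hdisj : Pairwise fun k n => Disjoint (closedBall (x k) (ρ k)) (closedBall (x n) (ρ n))) :
    ∑' n, ENNReal.ofReal (2 * ρ n) ^ s ≤
      ENNReal.ofReal (2 ^ (a * q) * (2 * D / m) ^ t) *
        (1 - ∑ i, ENNReal.ofReal (p i ^ q * r i ^ t))⁻¹ * ENNReal.ofReal (δ ^ (s - a * q - t)) := by
  have hSm : ∀ i, Measurable (S i) := fun i =>
    (LipschitzWith.of_dist_le' fun x y => (hS i x y).le).continuous.measurable
  have hr : ∀ i, 0 < r i := fun i => hm.trans_le (hmr i)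
  have hD : 0 < D := diam_nonneg.trans_lt hKD
  have hδ : 0 ≤ δ := by linarith [hρ 0]
  choose w hxw hwball hwρ using fun n =>
    exists_word_mem_image_subset_ball hS hK hKb hm hmr hrc hc hKD (hx n) (hρ n).1 (hρD n)
  have hwμ : ∀ n, ((w n).map p).prod ≤ (μ (ball (x n) (ρ n))).toReal := fun n =>
    (ENNReal.ofReal_le_iff_le_toReal (measure_ne_top _ _)).1 <|
      ofReal_prod_le_measure_of_image_wordMap_subset hSm hμ (fun i => (hp i).le) hμK (hwball n)
        measurableSet_ball
  have hinj : Function.Injective w := by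
    intro k n hkn
    by_contra hne
    exact Set.disjoint_left.1 (hdisj hne) (ball_subset_closedBall (hwball k (hkn ▸ hxw n)))
      (mem_closedBall_self (hρ n).1.le)
  set C := 2 ^ (a * q) * (2 * D / m) ^ t
  set f : ι → ℝ := fun i => p i ^ q * r i ^ t
  have hf : ∀ i, 0 ≤ f i := fun i => by positivity [hp i, hr i]
  have hpoint : ∀ n, ENNReal.ofReal (2 * ρ n) ^ s ≤ ENNReal.ofReal (C * δ ^ (s - a * q - t)) *
      ((w n).map fun i => ENNReal.ofReal (f i)).prod := by
    intro n
    rw [ENNReal.ofReal_rpow_of_pos (by linarith [(hρ n).1]), ← ENNReal.ofReal_list_prod_map hf,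
      ← ENNReal.ofReal_mul (by positivity), ← list_prod_map_rpow_mul_rpow hp hr]
    exact ENNReal.ofReal_le_ofReal <| two_mul_rpow_le (hρ n).1 (hρ n).2 hm hD
      (List.prod_pos (List.forall_mem_map.2 fun i _ => hp i)) ((hwμ n).trans (hxμ n))
      (List.prod_nonneg (List.forall_mem_map.2 fun i _ => (hr i).le)) (hwρ n) hq ht hs
  calc ∑' n, ENNReal.ofReal (2 * ρ n) ^ s
      ≤ ∑' n, ENNReal.ofReal (C * δ ^ (s - a * q - t)) *
          ((w n).map fun i => ENNReal.ofReal (f i)).prod := ENNReal.tsum_le_tsum hpoint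
    _ = ENNReal.ofReal (C * δ ^ (s - a * q - t)) *
          ∑' n, ((w n).map fun i => ENNReal.ofReal (f i)).prod := ENNReal.tsum_mul_left
    _ ≤ ENNReal.ofReal (C * δ ^ (s - a * q - t)) *
          ∑' v : List ι, (v.map fun i => ENNReal.ofReal (f i)).prod := by
      gcongr
      exact ENNReal.tsum_comp_le_tsum_of_injective hinj _
    _ = _ := by
      rw [ENNReal.tsum_list_prod_map, ENNReal.ofReal_mul (by positivity)]
      ring

lemma prePackingMeasure_setOf_measure_ball_le_eq_zero [Nonempty ι] [IsFiniteMeasure μ]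
    (hr : ∀ i, r i ∈ Ioo 0 1) (hS : ∀ i x y, dist (S i x) (S i y) = r i * dist x y)
    (hK : K ⊆ ⋃ i, S i '' K) (hKb : Bornology.IsBounded K)
    (hμ : μ = ∑ i, ENNReal.ofReal (p i) • μ.map (S i)) (hp : ∀ i, 0 < p i) (hμK : μ K = 1)
    {a q t s ρ₀ : ℝ} (hq : q ≤ 0) (ht : 0 ≤ t) (hf : ∑ i, p i ^ q * r i ^ t < 1)
    (hs : a * q + t < s) (hρ₀ : 0 < ρ₀) :
    prePackingMeasure s {x ∈ K | ∀ ρ ∈ Ioo 0 ρ₀, (μ (ball x ρ)).toReal ≤ ρ ^ a} = 0 := by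
  obtain ⟨imin, himin⟩ := Finite.exists_min r
  obtain ⟨imax, himax⟩ := Finite.exists_max r
  set D := diam K + 1
  have hD : 0 < D := by linarith [diam_nonneg (s := K)]
  have hf' : ∑ i, ENNReal.ofReal (p i ^ q * r i ^ t) < 1 := by
    rw [← ENNReal.ofReal_sum_of_nonneg fun i _ => by positivity [hp i, (hr i).1]]
    exact ENNReal.ofReal_lt_one.2 hf
  refine prePackingMeasure_eq_zero_of_forall_le (θ := s - a * q - t) (δ₀ := min (2 * D) ρ₀)
    (C := ENNReal.ofReal (2 ^ (a * q) * (2 * D / r imin) ^ t) *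
      (1 - ∑ i, ENNReal.ofReal (p i ^ q * r i ^ t))⁻¹) (by linarith) (lt_min (by positivity) hρ₀)
    (ENNReal.mul_ne_top ENNReal.ofReal_ne_top (ENNReal.inv_ne_top.2 (tsub_pos_of_lt hf').ne'))
    fun δ _ hδ x ρ hx hρ hdisj => ?_
  have hρD : ∀ n, 2 * ρ n ≤ 2 * D := fun n => (hρ n).2.trans (hδ.trans (min_le_left _ _))
  have hρρ₀ : ∀ n, 2 * ρ n ≤ ρ₀ := fun n => (hρ n).2.trans (hδ.trans (min_le_right _ _))
  exact tsum_rpow_le_of_measure_ball_le hS hK hKb (hr imin).1 himin himax (hr imax).2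
    (lt_add_one _) hμ hp hμK hq ht hs.le (fun n => (hx n).1)
    (fun n => (hx n).2 _ ⟨(hρ n).1, by linarith [(hρ n).1, hρρ₀ n]⟩) hρ
    (fun n => by linarith [hρD n]) hdisj

lemma dimP_setOf_le_liminf_le_max_mul_add [Nonempty ι] [IsProbabilityMeasure μ]
    (hr : ∀ i, r i ∈ Ioo 0 1)
    (hS : ∀ i x y, dist (S i x) (S i y) = r i * dist x y) (hK : K ⊆ ⋃ i, S i '' K)
    (hKb : Bornology.IsBounded K) (hμ : μ = ∑ i, ENNReal.ofReal (p i) • μ.map (S i))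
    (hp : ∀ i, 0 < p i) (hμK : μ K = 1) {α q t : ℝ} (hq : q ≤ 0) (ht : 0 ≤ t)
    (hf : ∑ i, p i ^ q * r i ^ t < 1) :
    dimP {x ∈ K | α ≤ liminf (fun ρ => Real.log (μ (ball x ρ)).toReal / Real.log ρ) (𝓝[>] 0)} ≤
      max (α * q + t) 0 := by
  refine dimP_le_max_of_packingMeasure_eq_zero fun s hs _ => ?_
  obtain ⟨ε, hε, hεs⟩ : ∃ ε > 0, (α - ε) * q + t < s := by
    refine ⟨(s - (α * q + t)) / (2 * (1 - q)), div_pos (by linarith) (by linarith), ?_⟩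
    have hεq : (s - (α * q + t)) / (2 * (1 - q)) * (1 - q) = (s - (α * q + t)) / 2 := by
      field_simp [show 1 - q ≠ 0 by linarith]
    nlinarith [div_pos (sub_pos.2 hs) (show (0 : ℝ) < 2 * (1 - q) by linarith)]
  have hB : ∀ k : ℕ, prePackingMeasure s
      {x ∈ K | ∀ ρ ∈ Ioo 0 (1 / (k + 1 : ℝ)), (μ (ball x ρ)).toReal ≤ ρ ^ (α - ε)} = 0 :=
    fun k => prePackingMeasure_setOf_measure_ball_le_eq_zero hr hS hK hKb hμ hp hμK hq ht hf
      hεs Nat.one_div_pos_of_nat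
  refine packingMeasure_eq_zero_of_subset_iUnion ?_ hB
  rintro x ⟨hxK, hx⟩
  obtain ⟨u, hu, hsub⟩ := mem_nhdsGT_iff_exists_Ioo_subset.1 <|
    eventually_le_rpow_of_lt_liminf (u := fun ρ => (μ (ball x ρ)).toReal) (a := α - ε)
      (fun _ => ENNReal.toReal_nonneg) (fun _ => measureReal_le_one) (by linarith)
  obtain ⟨k, hk⟩ := exists_nat_one_div_lt (mem_Ioi.1 hu)
  exact mem_iUnion.2 ⟨k, hxK, fun ρ hρ => hsub ⟨hρ.1, hρ.2.trans hk⟩⟩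

lemma dimP_setOf_le_liminf_le_max_of_nonpos [Nonempty ι] [IsProbabilityMeasure μ]
    (hr : ∀ i, r i ∈ Ioo 0 1)
    (hS : ∀ i x y, dist (S i x) (S i y) = r i * dist x y) (hK : K ⊆ ⋃ i, S i '' K)
    (hKb : Bornology.IsBounded K) (hμ : μ = ∑ i, ENNReal.ofReal (p i) • μ.map (S i))
    (hp : ∀ i, 0 < p i) (hpsum : ∑ i, p i = 1) (hμK : μ K = 1) {β : ℝ → ℝ}
    (hβ : ∀ q, ∑ i, p i ^ q * r i ^ β q = 1) {α q : ℝ} (hq : q ≤ 0) :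
    dimP {x ∈ K | α ≤ liminf (fun ρ => Real.log (μ (ball x ρ)).toReal / Real.log ρ) (𝓝[>] 0)} ≤
      max (α * q + β q) 0 := by
  refine le_of_forall_pos_le_add fun η hη => ?_
  have hf : ∑ i, p i ^ q * r i ^ (β q + η) < 1 :=
    hβ q ▸ strictAnti_sum_rpow_mul_rpow hp hr q (lt_add_of_pos_right _ hη)
  calc _ ≤ max (α * q + (β q + η)) 0 := dimP_setOf_le_liminf_le_max_mul_add hr hS hK hKb hμ hp
        hμK hq (by linarith [nonneg_of_nonpos_of_sum_rpow_mul_rpow_eq_one hp hpsum hr hβ hq]) hf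
    _ ≤ max (α * q + β q) 0 + η :=
      max_le (by linarith [le_max_left (α * q + β q) 0])
        (by linarith [le_max_right (α * q + β q) 0])

lemma dimP_setOf_le_liminf_le_max [Nonempty ι] [IsProbabilityMeasure μ]
    (hr : ∀ i, r i ∈ Ioo 0 1)
    (hS : ∀ i x y, dist (S i x) (S i y) = r i * dist x y) (hK : K ⊆ ⋃ i, S i '' K)
    (hKb : Bornology.IsBounded K) (hμ : μ = ∑ i, ENNReal.ofReal (p i) • μ.map (S i))
    (hp : ∀ i, 0 < p i) (hpsum : ∑ i, p i = 1) (hμK : μ K = 1) {β : ℝ → ℝ}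
    (hβ : ∀ q, ∑ i, p i ^ q * r i ^ β q = 1) {β'₀ : ℝ} (hβ' : HasDerivAt β β'₀ 0) {α : ℝ}
    (hα : -β'₀ ≤ α) (q : ℝ) :
    dimP {x ∈ K | α ≤ liminf (fun ρ => Real.log (μ (ball x ρ)).toReal / Real.log ρ) (𝓝[>] 0)} ≤
      max (α * q + β q) 0 := by
  rcases le_or_gt q 0 with hq | hq
  · exact dimP_setOf_le_liminf_le_max_of_nonpos hr hS hK hKb hμ hp hpsum hμK hβ hq
  · refine (dimP_setOf_le_liminf_le_max_of_nonpos hr hS hK hKb hμ hp hpsum hμK hβ le_rfl).trans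
      (max_le_max_right 0 ?_)
    simpa using le_mul_add_of_hasDerivAt hp hr hβ hβ' hα hq.le

end Estimate

theorem dimP_lower_level_set_le_general (N d : ℕ) (hN : 1 ≤ N)
    (S : Fin N → EuclideanSpace ℝ (Fin d) → EuclideanSpace ℝ (Fin d))
    (r p : Fin N → ℝ) (hr : ∀ i, r i ∈ Set.Ioo (0:ℝ) 1)
    (hS : ∀ i x y, dist (S i x) (S i y) = r i * dist x y)
    (hp : ∀ i, 0 < p i) (hpsum : ∑ i, p i = 1)
    (K : Set (EuclideanSpace ℝ (Fin d))) (hKne : K.Nonempty) (hKc : IsCompact K)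
    (hK : K = ⋃ i, S i '' K)
    (μ : Measure (EuclideanSpace ℝ (Fin d))) [IsProbabilityMeasure μ]
    (hμ : μ = ∑ i, ENNReal.ofReal (p i) • μ.map (S i))
    (β : ℝ → ℝ) (hβ : ∀ q, ∑ i, p i ^ q * r i ^ β q = 1)
    (β'0 : ℝ) (hβ' : HasDerivAt β β'0 0)
    (α : ℝ) (hα : -β'0 ≤ α) :
    dimP {x ∈ K |
        α ≤ Filter.liminf (fun ρ => Real.log (μ (ball x ρ)).toReal / Real.log ρ)
          (𝓝[>] (0:ℝ))} ≤
      sInf (Set.range fun q : ℝ => α * q + β q) := by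
  have : Nonempty (Fin N) := ⟨⟨0, hN⟩⟩
  obtain ⟨imax, himax⟩ := Finite.exists_max r
  have hμK : μ K = 1 := measure_attractor_eq_one hS (fun i => (hr i).1.le) himax (hr imax).2 hμ
    (fun i => (hp i).le) hpsum (fun i x hx => by rw [hK]; exact mem_iUnion.2 ⟨i, x, hx, rfl⟩)
    hKc.isClosed hKne
  have hdim := dimP_setOf_le_liminf_le_max hr hS hK.subset hKc.isBounded hμ hp hpsum hμK hβ hβ' hα
  by_cases hbdd : BddBelow (range fun q => α * q + β q)
  · exact le_csInf (range_nonempty _) <| forall_mem_range.2 fun q =>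
      (hdim q).trans_eq (max_eq_left (mul_add_nonneg_of_bddBelow hp hr hβ hbdd q))
  · obtain ⟨q, hq⟩ : ∃ q, α * q + β q < 0 := by
      by_contra! h
      exact hbdd ⟨0, forall_mem_range.2 h⟩
    -- `sInf` of a set of reals that is unbounded below is `0`.
    rw [Real.sInf_of_not_bddBelow hbdd]
    exact (hdim q).trans_eq (max_eq_right hq.le)

theorem dimP_lower_level_set_le (N d : ℕ) (hN : 1 ≤ N)
    (S : Fin N → EuclideanSpace ℝ (Fin d) → EuclideanSpace ℝ (Fin d))
    (r p : Fin N → ℝ) (hr : ∀ i, r i ∈ Set.Ioo (0:ℝ) 1)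
    (hS : ∀ i x y, dist (S i x) (S i y) = r i * dist x y)
    (hp : ∀ i, 0 < p i) (hpsum : ∑ i, p i = 1)
    (K : Set (EuclideanSpace ℝ (Fin d))) (hKne : K.Nonempty) (hKc : IsCompact K)
    (hK : K = ⋃ i, S i '' K)
    (μ : Measure (EuclideanSpace ℝ (Fin d))) [IsProbabilityMeasure μ]
    (hμ : μ = ∑ i, ENNReal.ofReal (p i) • μ.map (S i))
    -- open set condition
    (U : Set (EuclideanSpace ℝ (Fin d))) (hUo : IsOpen U) (hUne : U.Nonempty)
    (hUb : Bornology.IsBounded U) (hUsub : ∀ i, S i '' U ⊆ U)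
    (hUdisj : Pairwise fun i j : Fin N => Disjoint (S i '' U) (S j '' U))
    (β : ℝ → ℝ) (hβ : ∀ q, ∑ i, p i ^ q * r i ^ β q = 1)
    (β'0 : ℝ) (hβ' : HasDerivAt β β'0 0)
    (α : ℝ) (hα : -β'0 ≤ α) :
    dimP {x ∈ K |
        α ≤ Filter.liminf (fun ρ => Real.log (μ (ball x ρ)).toReal / Real.log ρ)
          (𝓝[>] (0:ℝ))} ≤
      sInf (Set.range fun q : ℝ => α * q + β q) :=
  dimP_lower_level_set_le_general N d hN S r p hr hS hp hpsum K hKne hKc hK μ hμ β hβ β'0 hβ' α hα
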